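/- If A is a 3×3 complex matrix that commutes with both H₀ = diag(0,1,2) and V = [[0,1,0],[1,0,1],[0,1,0]], then A is a scalar multiple of the identity matrix, i.e. A = c·I for some c ∈ ℂ. In particular, the only Hermitian observables conserved under all Hamiltonians of the form H₀ + f·V (f ∈ ℝ) are multiples of the identity. -/

import Mathlib

/-!
Commuting with `H₀`, whose eigenvalues `0, 1, 2` are distinct, forces `A` to be diagonal.
A diagonal matrix commuting with `V` has equal entries at `i` and `j` whenever `V i j ≠ 0`,
and the nonzero entries of `V` link `0 — 1 — 2`, so all diagonal entries of `A` agree.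
-/

open Matrix

/-- The free Hamiltonian `H₀ = diag(0,1,2)`. -/
noncomputable def H0 : Matrix (Fin 3) (Fin 3) ℂ := !![0, 0, 0; 0, 1, 0; 0, 0, 2]

/-- The dipole interaction Hamiltonian `V`. -/
noncomputable def Vdip : Matrix (Fin 3) (Fin 3) ℂ := !![0, 1, 0; 1, 0, 1; 0, 1, 0]

namespace Matrix

variable {n R : Type*} [Fintype n] [DecidableEq n] [CommRing R] [NoZeroDivisors R]

theorem isDiag_of_mul_diagonal_eq {A : Matrix n n R} {d : n → R} (hd : Function.Injective d)
    (h : A * diagonal d = diagonal d * A) : A.IsDiag := by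
  intro i j hij
  have hij_entry := congrFun (congrFun h i) j
  rw [mul_diagonal, diagonal_mul] at hij_entry
  have : (d j - d i) * A i j = 0 := by linear_combination hij_entry
  exact (mul_eq_zero.1 this).resolve_left (sub_ne_zero.2 (hd.ne (Ne.symm hij)))

theorem eq_of_diagonal_mul_eq {M : Matrix n n R} {a : n → R}
    (h : diagonal a * M = M * diagonal a) {i j : n} (hM : M i j ≠ 0) : a i = a j := by
  have hij_entry := congrFun (congrFun h i) j
  rw [mul_diagonal, diagonal_mul] at hij_entry
  have : (a i - a j) * M i j = 0 := by linear_combination hij_entry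
  exact sub_eq_zero.1 ((mul_eq_zero.1 this).resolve_right hM)

end Matrix

theorem H0_eq_diagonal : H0 = diagonal fun i : Fin 3 => ((i : ℕ) : ℂ) := by
  ext i j
  fin_cases i <;> fin_cases j <;> simp [H0]

theorem stmt1 (A : Matrix (Fin 3) (Fin 3) ℂ)
    (hH : A * H0 = H0 * A) (hV : A * Vdip = Vdip * A) :
    ∃ c : ℂ, A = c • (1 : Matrix (Fin 3) (Fin 3) ℂ) := by
  rw [H0_eq_diagonal] at hH
  have hdiag : A.IsDiag :=
    isDiag_of_mul_diagonal_eq (Nat.cast_injective.comp Fin.val_injective) hH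
  rw [← hdiag.diagonal_diag] at hV ⊢
  have h01 : A.diag 0 = A.diag 1 := eq_of_diagonal_mul_eq hV (by simp [Vdip])
  have h12 : A.diag 1 = A.diag 2 := eq_of_diagonal_mul_eq hV (by simp [Vdip])
  refine ⟨A.diag 0, ?_⟩
  rw [smul_one_eq_diagonal]
  congr 1
  funext i
  fin_cases i
  exacts [rfl, h01.symm, (h01.trans h12).symm]
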